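/- arXiv:1912.04175 — 3 statements merged into one kernel-verified Lean document; each statement's English description precedes it below -/
import Mathlib

section
/- Let X be a nonnegative random variable with continuous distribution function F admitting a density f and with E[X] < ∞. Let W : [0,1] → ℝ be a bounded measurable function and K(u) = ∫_u^1 (W(v) − 1)dv. Let I : [0,∞) → ℝ be absolutely continuous with I(0) = 0 and derivative I′(t) ∈ [0,1] for almost every t. Then E[I(X)·(W(F(X)) − 1)] = ∫_0^∞ K(F(t))·I′(t) dt; i.e., the expected reinsurer surplus π_I − E{I(X)} under the premium π_I = E{I(X)W(F(X))} equals ∫_0^∞ K(F(t)) dI(t). -/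
/-!
The law `μ` of `X` has a density, hence no atoms, so its distribution function `F` is
continuous and `F(X)` is uniform on `(0,1]`; in particular `{x ≥ t}` and `{F x > F t}` differ by
a `μ`-null set, which turns the tail integral `∫_{x ≥ t} (W(F x) − 1) dμ` into `K(F t)`. Writing
`I(x) = ∫_0^x I′` and exchanging the order of integration (legitimate because `E[X] < ∞`)
gives `E[I(X)(W(F X) − 1)] = ∫_0^∞ I′(t) ∫_{x ≥ t} (W(F x) − 1) dμ dt`.
-/

open MeasureTheory intervalIntegral Set Filter Topology ProbabilityTheory

lemma Monotone.exists_preimage_Iic_eq_Iic {F : ℝ → ℝ} (hmono : Monotone F)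
    (hcont : Continuous F) {u : ℝ} (hne : (F ⁻¹' Iic u).Nonempty) (hbdd : BddAbove (F ⁻¹' Iic u)) :
    ∃ s, F s = u ∧ F ⁻¹' Iic u = Iic s := by
  set s := sSup (F ⁻¹' Iic u)
  have hs : F s ≤ u := (isClosed_Iic.preimage hcont).csSup_mem hne hbdd
  refine ⟨s, le_antisymm hs ?_, ?_⟩
  · refine _root_.ge_of_tendsto (hcont.continuousWithinAt (s := Ioi s) (x := s)) ?_
    filter_upwards [self_mem_nhdsWithin] with y hy
    exact le_of_not_ge fun hyu => (le_csSup hbdd hyu).not_gt hy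
  · exact Subset.antisymm (fun x hx => le_csSup hbdd hx) fun x hx => (hmono hx).trans hs

theorem integral_primitive_mul_eq {μ : Measure ℝ} [SFinite μ] (hμ : ∀ᵐ x ∂μ, 0 ≤ x)
    (hint : Integrable (fun x => x) μ) {i h : ℝ → ℝ} (hi : Measurable i) {Ci : ℝ}
    (hiC : ∀ t, |i t| ≤ Ci) (hh : Measurable h) {Ch : ℝ} (hhC : ∀ x, |h x| ≤ Ch) :
    ∫ x, (∫ t in 0..x, i t) * h x ∂μ = ∫ t in Ioi 0, i t * ∫ x in Ici t, h x ∂μ := by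
  set S : Set (ℝ × ℝ) := {p | p.2 ∈ Ioc 0 p.1}
  set φ : ℝ → ℝ → ℝ := fun x t => S.indicator (fun p => i p.2 * h p.1) (x, t)
  have hS : MeasurableSet S :=
    (measurableSet_lt measurable_const measurable_snd).inter
      (measurableSet_le measurable_snd measurable_fst)
  have hSfin : μ.prod volume S < ⊤ := by
    rw [Measure.prod_apply hS]
    calc ∫⁻ x, volume (Prod.mk x ⁻¹' S) ∂μ = ∫⁻ x, ENNReal.ofReal x ∂μ :=
          lintegral_congr fun x => by
            rw [show Prod.mk x ⁻¹' S = Ioc 0 x from rfl, Real.volume_Ioc, sub_zero]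
      _ < ⊤ := hint.lintegral_lt_top
  have hφ : Integrable (Function.uncurry φ) (μ.prod volume) := by
    refine (integrable_indicator_iff hS).2 (IntegrableOn.of_bound hSfin ?_ (Ci * Ch) ?_)
    · exact ((hi.comp measurable_snd).mul (hh.comp measurable_fst)).aestronglyMeasurable
    · refine ae_of_all _ fun p => ?_
      rw [Real.norm_eq_abs, abs_mul]
      exact mul_le_mul (hiC _) (hhC _) (abs_nonneg _) ((abs_nonneg _).trans (hiC 0))
  calc ∫ x, (∫ t in 0..x, i t) * h x ∂μ = ∫ x, (∫ t, φ x t) ∂μ := by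
        refine integral_congr_ae (hμ.mono fun x hx => ?_)
        change (∫ t in 0..x, i t) * h x = ∫ t, (Ioc 0 x).indicator (fun t => i t * h x) t
        rw [MeasureTheory.integral_indicator measurableSet_Ioc, MeasureTheory.integral_mul_const,
          integral_of_le hx]
    _ = ∫ t, ∫ x, φ x t ∂μ := integral_integral_swap hφ
    _ = ∫ t, (Ioi 0).indicator (fun t => i t * ∫ x in Ici t, h x ∂μ) t := by
        refine integral_congr_ae (ae_of_all _ fun t => ?_)
        by_cases ht : 0 < t
        · have : (fun x => φ x t) = (Ici t).indicator (fun x => i t * h x) := by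
            ext x; simp [φ, S, indicator_apply, ht]
          change ∫ x, φ x t ∂μ = _
          rw [this, MeasureTheory.integral_indicator measurableSet_Ici,
            MeasureTheory.integral_const_mul, indicator_of_mem (mem_Ioi.2 ht)]
        · simp [φ, S, indicator_apply, ht]
    _ = ∫ t in Ioi 0, i t * ∫ x in Ici t, h x ∂μ :=
        MeasureTheory.integral_indicator measurableSet_Ioi

namespace ProbabilityTheory

variable {μ : Measure ℝ} [IsProbabilityMeasure μ] [NullSingletonClass μ]

lemma continuous_cdf : Continuous (cdf μ) := by
  refine continuous_iff_continuousAt.2 fun x => continuousAt_iff_continuous_left_right.2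
    ⟨?_, (cdf μ).right_continuous x⟩
  rw [← continuousWithinAt_Iio_iff_Iic, (monotone_cdf μ).continuousWithinAt_Iio_iff_leftLim_eq]
  have h := (cdf μ).measure_singleton x
  rw [measure_cdf, measure_singleton, eq_comm, ENNReal.ofReal_eq_zero, sub_nonpos] at h
  exact le_antisymm ((monotone_cdf μ).leftLim_le le_rfl) h

lemma map_cdf : μ.map (cdf μ) = volume.restrict (Ioc 0 1) := by
  have hF := monotone_cdf μ
  refine Measure.ext_of_Iic _ _ fun u => ?_
  have hIoc : Iic u ∩ Ioc 0 1 = Ioc 0 (min u 1) := by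
    ext x; simp only [mem_inter_iff, mem_Iic, mem_Ioc, le_min_iff]; tauto
  rw [Measure.map_apply continuous_cdf.measurable measurableSet_Iic,
    Measure.restrict_apply' measurableSet_Ioc, hIoc, Real.volume_Ioc, sub_zero]
  rcases le_or_gt 1 u with hu1 | hu1
  · have huniv : cdf μ ⁻¹' Iic u = univ :=
      eq_univ_of_forall fun x => (cdf_le_one μ x).trans hu1
    simp [huniv, min_eq_right hu1]
  rcases (cdf μ ⁻¹' Iic u).eq_empty_or_nonempty with hempty | hne
  · have hu : u ≤ 0 := ge_of_tendsto' (tendsto_cdf_atBot μ) fun x =>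
      (not_le.1 (eq_empty_iff_forall_notMem.1 hempty x)).le
    rw [hempty, measure_empty, eq_comm, ENNReal.ofReal_eq_zero]
    exact (min_le_left _ _).trans hu
  have hbdd : BddAbove (cdf μ ⁻¹' Iic u) := by
    obtain ⟨b, hb⟩ := ((tendsto_cdf_atTop μ).eventually (eventually_gt_nhds hu1)).exists
    exact ⟨b, fun x hx => le_of_not_gt fun hbx => (hF hbx.le).trans hx |>.not_gt hb⟩
  obtain ⟨s, hsu, hpre⟩ := hF.exists_preimage_Iic_eq_Iic continuous_cdf hne hbdd
  rw [hpre, ← ofReal_cdf, hsu, min_eq_left hu1.le]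

lemma measure_preimage_cdf_singleton (c : ℝ) : μ (cdf μ ⁻¹' {c}) = 0 := by
  rw [← Measure.map_apply continuous_cdf.measurable (measurableSet_singleton c), map_cdf,
    measure_singleton]

lemma Ici_ae_eq_preimage_cdf_Ioi (t : ℝ) : Ici t =ᵐ[μ] cdf μ ⁻¹' Ioi (cdf μ t) := by
  refine ae_eq_set.2 ⟨measure_mono_null (fun x hx => ?_)
    (measure_preimage_cdf_singleton (cdf μ t)), measure_mono_null (fun x hx => ?_) measure_empty⟩
  · exact le_antisymm (not_lt.1 hx.2) (monotone_cdf μ hx.1)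
  · exact hx.2 (le_of_not_gt fun hxt => (monotone_cdf μ hxt.le).not_gt hx.1)

lemma setIntegral_Ici_comp_cdf {g : ℝ → ℝ} (hg : Measurable g) (t : ℝ) :
    ∫ x in Ici t, g (cdf μ x) ∂μ = ∫ v in cdf μ t..1, g v := by
  rw [setIntegral_congr_set (Ici_ae_eq_preimage_cdf_Ioi t),
    ← setIntegral_map measurableSet_Ioi hg.aestronglyMeasurable continuous_cdf.aemeasurable,
    map_cdf, Measure.restrict_restrict measurableSet_Ioi, inter_comm, Ioc_inter_Ioi, max_comm,
    max_eq_left (cdf_nonneg μ t), integral_of_le (cdf_le_one μ t)]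

end ProbabilityTheory

theorem reinsurer_surplus_integral_representation_general
    {Ω : Type*} [MeasurableSpace Ω] (P : Measure Ω) [IsProbabilityMeasure P]
    (X : Ω → ℝ) (hX : Measurable X) (hXnonneg : ∀ ω, 0 ≤ X ω)
    (hXint : Integrable X P)
    (f : ℝ → ℝ)
    (hdens : Measure.map X P = volume.withDensity (fun x => ENNReal.ofReal (f x)))
    (F : ℝ → ℝ) (hF : ∀ x, F x = (P {ω | X ω ≤ x}).toReal)
    (W : ℝ → ℝ) (hW : Measurable W) (Cw : ℝ) (hWbd : ∀ u, |W u| ≤ Cw)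
    (K : ℝ → ℝ) (hK : ∀ u, K u = ∫ v in u..1, (W v - 1))
    (i : ℝ → ℝ) (hi : Measurable i) (hi01 : ∀ t, i t ∈ Set.Icc (0 : ℝ) 1)
    (I : ℝ → ℝ) (hI : ∀ x, I x = ∫ t in (0 : ℝ)..x, i t) :
    ∫ ω, I (X ω) * (W (F (X ω)) - 1) ∂P = ∫ t in Set.Ioi (0 : ℝ), K (F t) * i t := by
  set μ := P.map X
  have : IsProbabilityMeasure μ := Measure.isProbabilityMeasure_map hX.aemeasurable
  have : NullSingletonClass μ := by rw [show μ = _ from hdens]; infer_instance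
  obtain rfl : F = cdf μ := funext fun x => by
    rw [hF, cdf_eq_real, measureReal_def, Measure.map_apply hX measurableSet_Iic]; rfl
  obtain rfl : I = fun x => ∫ t in 0..x, i t := funext hI
  have hi_abs (t : ℝ) : |i t| ≤ 1 := abs_le.2 ⟨by linarith [(hi01 t).1], (hi01 t).2⟩
  have hI_cont : Continuous fun x => ∫ t in 0..x, i t := continuous_primitive (fun a b =>
    intervalIntegrable_const.mono_fun' hi.aestronglyMeasurable (ae_of_all _ hi_abs)) 0
  have hWF : Measurable fun x => W (cdf μ x) - 1 :=
    (hW.comp continuous_cdf.measurable).sub measurable_const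
  calc ∫ ω, (∫ t in 0..X ω, i t) * (W (cdf μ (X ω)) - 1) ∂P
      = ∫ x, (∫ t in 0..x, i t) * (W (cdf μ x) - 1) ∂μ :=
        (integral_map hX.aemeasurable (hI_cont.measurable.mul hWF).aestronglyMeasurable).symm
    _ = ∫ t in Ioi 0, i t * ∫ x in Ici t, (W (cdf μ x) - 1) ∂μ :=
        integral_primitive_mul_eq ((ae_map_iff hX.aemeasurable measurableSet_Ici).2
          (ae_of_all _ hXnonneg)) ((integrable_map_measure aestronglyMeasurable_id
          hX.aemeasurable).2 hXint) hi hi_abs hWF (Ch := Cw + 1) fun x =>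
          (abs_sub _ _).trans (by rw [abs_one]; linarith [hWbd (cdf μ x)])
    _ = ∫ t in Ioi 0, K (cdf μ t) * i t := setIntegral_congr_fun measurableSet_Ioi fun t _ => by
        rw [setIntegral_Ici_comp_cdf (g := (W · - 1)) (hW.sub measurable_const), hK, mul_comm]

/-- Let `X ≥ 0` be integrable with continuous distribution function `F`
admitting a density `f`, let `W : [0,1] → ℝ` be bounded measurable with
`K u = ∫_u^1 (W v − 1) dv`, and let `I` be absolutely continuous with `I 0 = 0` and
derivative `i = I′` taking values in `[0,1]` (so `I x = ∫_0^x i t dt`). Then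
`E[I(X) (W(F(X)) − 1)] = ∫_0^∞ K(F t) I′(t) dt`, i.e. the expected reinsurer surplus
`π_I − E[I(X)]` under the premium `π_I = E[I(X) W(F(X))]` equals `∫_0^∞ K(F t) dI(t)`. -/
theorem reinsurer_surplus_integral_representation
    {Ω : Type*} [MeasurableSpace Ω] (P : Measure Ω) [IsProbabilityMeasure P]
    (X : Ω → ℝ) (hX : Measurable X) (hXnonneg : ∀ ω, 0 ≤ X ω)
    (hXint : Integrable X P)
    (f : ℝ → ℝ) (hf : Measurable f) (hfnonneg : ∀ x, 0 ≤ f x)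
    (hdens : Measure.map X P = volume.withDensity (fun x => ENNReal.ofReal (f x)))
    (F : ℝ → ℝ) (hF : ∀ x, F x = (P {ω | X ω ≤ x}).toReal)
    (W : ℝ → ℝ) (hW : Measurable W) (Cw : ℝ) (hWbd : ∀ u, |W u| ≤ Cw)
    (K : ℝ → ℝ) (hK : ∀ u, K u = ∫ v in u..1, (W v - 1))
    (i : ℝ → ℝ) (hi : Measurable i) (hi01 : ∀ t, i t ∈ Set.Icc (0 : ℝ) 1)
    (I : ℝ → ℝ) (hI : ∀ x, I x = ∫ t in (0 : ℝ)..x, i t) :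
    ∫ ω, I (X ω) * (W (F (X ω)) - 1) ∂P = ∫ t in Set.Ioi (0 : ℝ), K (F t) * i t :=
  reinsurer_surplus_integral_representation_general P X hX hXnonneg hXint f hdens F hF W hW Cw hWbd
    K hK i hi hi01 I hI
end

section
/- Let X be a nonnegative random variable with continuous distribution function F admitting a density and with E[X] < ∞, let W : [0,1] → ℝ be bounded measurable with K(u) = ∫_u^1 (W(v) − 1)dv, and let I_a(x) = max(x−a₁,0) − max(x−a₂,0) be the one-layer contract with 0 ≤ a₁ ≤ a₂. Then the expected reinsurer surplus satisfies E[I_a(X)·W(F(X))] − E[I_a(X)] = ∫_{a₁}^{a₂} K(F(t)) dt. -/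
/-! Writing the layer as `I_a(x) = ∫_{a₁}^{a₂} 1{t < x} dt`, Fubini turns the surplus
`E[I_a(X) (W(F X) - 1)]` into `∫_{a₁}^{a₂} E[1{X > t} (W(F X) - 1)] dt`. The law of `X` has
a density, hence no atoms, so `F` is continuous: then `F(X)` is uniform on `[0,1]` and
`X > t ↔ F X > F t` almost surely, which makes the inner expectation
`∫_{F t}^1 (W - 1) = K(F t)`. -/

open MeasureTheory intervalIntegral

open Set ProbabilityTheory

theorem StieltjesFunction.continuous_of_measure_singleton (f : StieltjesFunction ℝ)
    (hf : ∀ x, f.measure {x} = 0) : Continuous f := by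
  refine continuous_iff_continuousAt.2 fun x => ?_
  rw [f.mono.continuousAt_iff_leftLim_eq_rightLim, f.rightLim_eq]
  have hjump := f.measure_singleton x
  rw [hf x, eq_comm, ENNReal.ofReal_eq_zero, sub_nonpos] at hjump
  exact le_antisymm (f.mono.leftLim_le le_rfl) hjump

namespace ProbabilityTheory

variable {μ : Measure ℝ} [IsProbabilityMeasure μ]

theorem continuous_cdf_of_measure_singleton (hμ : ∀ x, μ {x} = 0) : Continuous (cdf μ) :=
  (cdf μ).continuous_of_measure_singleton fun x => by rw [measure_cdf]; exact hμ x

theorem ae_cdf_lt_of_lt (hF : Continuous (cdf μ)) (s : ℝ) :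
    ∀ᵐ x ∂μ, s < x → cdf μ s < cdf μ x := by
  -- `A` is an interval to the right of `s` on which `cdf μ` is constant, so it carries no mass.
  set A := {x | s < x ∧ cdf μ x ≤ cdf μ s}
  suffices μ A = 0 by
    filter_upwards [measure_eq_zero_iff_ae_notMem.1 this] with x hx hsx
    exact lt_of_not_ge fun h => hx ⟨hsx, h⟩
  rcases A.eq_empty_or_nonempty with hA | hA
  · rw [hA, measure_empty]
  by_cases hbdd : BddAbove A
  · have hsup : cdf μ (sSup A) ≤ cdf μ s :=
      closure_minimal (fun x hx => hx.2) (isClosed_le hF continuous_const)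
        (csSup_mem_closure hA hbdd)
    refine measure_mono_null (t := Ioc s (sSup A)) (fun x hx => ⟨hx.1, le_csSup hbdd hx⟩) ?_
    rw [← measure_cdf μ, StieltjesFunction.measure_Ioc, ENNReal.ofReal_eq_zero, sub_nonpos]
    exact hsup
  · have hle : ∀ y, cdf μ y ≤ cdf μ s := fun y => by
      obtain ⟨x, hxA, hyx⟩ := not_bddAbove_iff.1 hbdd y
      exact (monotone_cdf μ hyx.le).trans hxA.2
    refine measure_mono_null (t := Ioi s) (fun x hx => hx.1) ?_
    rw [← measure_cdf μ, StieltjesFunction.measure_Ioi _ (tendsto_cdf_atTop μ),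
      ENNReal.ofReal_eq_zero, sub_nonpos]
    exact le_of_tendsto' (tendsto_cdf_atTop μ) hle

theorem measure_cdf_preimage_Iic_cdf (hF : Continuous (cdf μ)) (s : ℝ) :
    μ (cdf μ ⁻¹' Iic (cdf μ s)) = μ (Iic s) := by
  refine le_antisymm (measure_mono_ae ?_) (measure_mono fun x hx => monotone_cdf μ hx)
  filter_upwards [ae_cdf_lt_of_lt hF s] with x hx hxs
  exact le_of_not_gt fun h => (hx h).not_ge hxs

theorem measure_cdf_preimage_Iic (hF : Continuous (cdf μ)) {a : ℝ} (ha₀ : 0 ≤ a) (ha₁ : a ≤ 1) :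
    μ (cdf μ ⁻¹' Iic a) = ENNReal.ofReal a := by
  -- Off the range of `cdf μ`, the level `a` is one of its limits `0`, `1`.
  by_cases hlow : ∃ x, cdf μ x ≤ a
  · by_cases hhigh : ∃ x, a ≤ cdf μ x
    · obtain ⟨s, rfl⟩ := mem_range_of_exists_le_of_exists_ge hF hlow hhigh
      rw [measure_cdf_preimage_Iic_cdf hF, ofReal_cdf]
    · push Not at hhigh
      have ha : a = 1 := le_antisymm ha₁
        (le_of_tendsto' (tendsto_cdf_atTop μ) fun x => (hhigh x).le)
      have huniv : cdf μ ⁻¹' Iic a = univ := eq_univ_of_forall fun x => (hhigh x).le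
      rw [huniv, measure_univ, ha, ENNReal.ofReal_one]
  · push Not at hlow
    have ha : a = 0 := le_antisymm
      (ge_of_tendsto' (tendsto_cdf_atBot μ) fun x => (hlow x).le) ha₀
    have hempty : cdf μ ⁻¹' Iic a = ∅ :=
      eq_empty_of_forall_notMem fun x hx => (hlow x).not_ge hx
    rw [hempty, measure_empty, ha, ENNReal.ofReal_zero]

theorem map_cdf_eq_volume_restrict (hF : Continuous (cdf μ)) :
    μ.map (cdf μ) = volume.restrict (Ioc 0 1) := by
  refine Measure.ext_of_Iic _ _ fun a => ?_
  rw [Measure.map_apply (monotone_cdf μ).measurable measurableSet_Iic,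
    Measure.restrict_apply' measurableSet_Ioc, inter_comm, Ioc_inter_Iic, Real.volume_Ioc,
    sub_zero]
  rcases lt_or_ge a 0 with ha | ha
  · have hempty : cdf μ ⁻¹' Iic a = ∅ :=
      eq_empty_of_forall_notMem fun x hx => (cdf_nonneg μ x).not_gt (lt_of_le_of_lt hx ha)
    rw [hempty, measure_empty, eq_comm, ENNReal.ofReal_eq_zero]
    exact (min_le_right _ _).trans ha.le
  · have hclip : cdf μ ⁻¹' Iic a = cdf μ ⁻¹' Iic (1 ⊓ a) := by
      ext x
      simp [cdf_le_one]
    rw [hclip, measure_cdf_preimage_Iic hF (le_min zero_le_one ha) (min_le_left _ _)]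

theorem setIntegral_Ioi_comp_cdf (hF : Continuous (cdf μ)) {g : ℝ → ℝ}
    (hg : AEStronglyMeasurable g (volume.restrict (Ioc 0 1))) (t : ℝ) :
    ∫ x in Ioi t, g (cdf μ x) ∂μ = ∫ u in cdf μ t..1, g u := by
  have hFm : Measurable (cdf μ) := (monotone_cdf μ).measurable
  calc ∫ x in Ioi t, g (cdf μ x) ∂μ = ∫ x, (Ioi (cdf μ t)).indicator g (cdf μ x) ∂μ := by
        rw [← MeasureTheory.integral_indicator measurableSet_Ioi]
        refine integral_congr_ae ?_
        filter_upwards [ae_cdf_lt_of_lt hF t] with x hx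
        by_cases htx : t < x
        · simp [htx, hx htx]
        · simp [htx, (monotone_cdf μ (not_lt.1 htx)).not_gt]
    _ = ∫ u in Ioi (cdf μ t), g u ∂(volume.restrict (Ioc 0 1)) := by
        have hgF : AEStronglyMeasurable ((Ioi (cdf μ t)).indicator g) (μ.map (cdf μ)) := by
          rw [map_cdf_eq_volume_restrict hF]
          exact hg.indicator measurableSet_Ioi
        rw [← integral_map hFm.aemeasurable hgF, map_cdf_eq_volume_restrict hF,
          MeasureTheory.integral_indicator measurableSet_Ioi]
    _ = ∫ u in cdf μ t..1, g u := by
        have hset : Ioi (cdf μ t) ∩ Ioc 0 1 = Ioc (cdf μ t) 1 := by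
          ext u
          simp only [mem_inter_iff, mem_Ioi, mem_Ioc]
          exact ⟨fun h => ⟨h.1, h.2.2⟩, fun h => ⟨h.1, (cdf_nonneg μ t).trans_lt h.1, h.2⟩⟩
        rw [Measure.restrict_restrict measurableSet_Ioi, hset, integral_of_le (cdf_le_one μ t)]

end ProbabilityTheory

/-- The one-layer contract `I_a`. -/
def layer (a₁ a₂ x : ℝ) : ℝ := max (x - a₁) 0 - max (x - a₂) 0

theorem continuous_layer (a₁ a₂ : ℝ) : Continuous (layer a₁ a₂) := by
  unfold layer; fun_prop

theorem abs_layer_le (a₁ a₂ x : ℝ) : |layer a₁ a₂ x| ≤ |a₂ - a₁| :=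
  (abs_max_sub_max_le_abs _ _ _).trans_eq (by ring_nf)

theorem layer_eq_volume_real {a₁ a₂ : ℝ} (h : a₁ ≤ a₂) (x : ℝ) :
    layer a₁ a₂ x = volume.real (Iio x ∩ Ioc a₁ a₂) := by
  rw [measureReal_congr ((Iio_ae_eq_Iic (μ := volume) (a := x)).inter (ae_eq_refl (Ioc a₁ a₂))),
    inter_comm, Ioc_inter_Iic, Real.volume_real_Ioc, layer]
  rcases le_total x a₁ with hx₁ | hx₁
  · simp [hx₁, hx₁.trans h]
  rcases le_total x a₂ with hx₂ | hx₂
  · simp [hx₁, hx₂]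
  · simp [hx₁, hx₂, h]

theorem integral_layer_mul {μ : Measure ℝ} [SFinite μ] {g : ℝ → ℝ} (hg : Integrable g μ)
    {a₁ a₂ : ℝ} (h : a₁ ≤ a₂) :
    ∫ x, layer a₁ a₂ x * g x ∂μ = ∫ t in a₁..a₂, ∫ x in Ioi t, g x ∂μ := by
  let S : Set (ℝ × ℝ) := {p | p.2 < p.1}
  have hint : Integrable (Function.uncurry fun x t => S.indicator (fun p => g p.1) (x, t))
      (μ.prod (volume.restrict (Ioc a₁ a₂))) :=
    (hg.comp_fst _).indicator (measurableSet_lt measurable_snd measurable_fst)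
  calc ∫ x, layer a₁ a₂ x * g x ∂μ
      = ∫ x, (∫ t in Ioc a₁ a₂, S.indicator (fun p => g p.1) (x, t)) ∂μ := by
        refine integral_congr_ae (ae_of_all μ fun x => ?_)
        have hslice : ∀ t,
            S.indicator (fun p => g p.1) (x, t) = (Iio x).indicator (fun _ => g x) t :=
          fun t => by simp only [S, indicator_apply, mem_ofPred_eq, mem_Iio]
        simp only [hslice, integral_indicator_const _ measurableSet_Iio,
          measureReal_restrict_apply measurableSet_Iio, layer_eq_volume_real h, smul_eq_mul]
    _ = ∫ t in Ioc a₁ a₂, ∫ x, S.indicator (fun p => g p.1) (x, t) ∂μ :=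
        integral_integral_swap hint
    _ = ∫ t in a₁..a₂, ∫ x in Ioi t, g x ∂μ := by
        have hslice : ∀ x t, S.indicator (fun p => g p.1) (x, t) = (Ioi t).indicator g x :=
          fun x t => by simp only [S, indicator_apply, mem_ofPred_eq, mem_Ioi]
        simp only [hslice, MeasureTheory.integral_indicator measurableSet_Ioi, integral_of_le h]

theorem reinsurer_surplus_one_layer_general
    {Ω : Type*} [MeasurableSpace Ω] (P : Measure Ω) [IsProbabilityMeasure P]
    (X : Ω → ℝ) (hX : Measurable X)
    (f : ℝ → ℝ)
    (hdens : Measure.map X P = volume.withDensity (fun x => ENNReal.ofReal (f x)))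
    (F : ℝ → ℝ) (hF : ∀ x, F x = (P {ω | X ω ≤ x}).toReal)
    (W : ℝ → ℝ) (hW : Measurable W) (Cw : ℝ) (hWbd : ∀ u, |W u| ≤ Cw)
    (K : ℝ → ℝ) (hK : ∀ u, K u = ∫ v in u..1, (W v - 1))
    (a₁ a₂ : ℝ) (h₁₂ : a₁ ≤ a₂) :
    (∫ ω, (max (X ω - a₁) 0 - max (X ω - a₂) 0) * W (F (X ω)) ∂P) -
      (∫ ω, (max (X ω - a₁) 0 - max (X ω - a₂) 0) ∂P) = ∫ t in a₁..a₂, K (F t) := by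
  set ν := P.map X
  have : IsProbabilityMeasure ν := Measure.isProbabilityMeasure_map hX.aemeasurable
  obtain rfl : F = cdf ν := funext fun x => by
    rw [hF, cdf_eq_real, measureReal_def, Measure.map_apply hX measurableSet_Iic]
    rfl
  have hcont : Continuous (cdf ν) :=
    continuous_cdf_of_measure_singleton fun x => by rw [hdens]; exact measure_singleton x
  have hWF : Measurable fun x => W (cdf ν x) := hW.comp (monotone_cdf ν).measurable
  have hlayer : Integrable (layer a₁ a₂) ν :=
    .of_bound (continuous_layer a₁ a₂).aestronglyMeasurable _ (ae_of_all _ (abs_layer_le a₁ a₂))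
  have hmap : ∀ φ : ℝ → ℝ, Measurable φ → ∫ ω, φ (X ω) ∂P = ∫ x, φ x ∂ν :=
    fun φ hφ => (integral_map hX.aemeasurable hφ.aestronglyMeasurable).symm
  calc (∫ ω, layer a₁ a₂ (X ω) * W (cdf ν (X ω)) ∂P) - ∫ ω, layer a₁ a₂ (X ω) ∂P
      = ∫ x, layer a₁ a₂ x * (W (cdf ν x) - 1) ∂ν := by
        rw [hmap (fun x => layer a₁ a₂ x * W (cdf ν x))
            ((continuous_layer a₁ a₂).measurable.mul hWF),
          hmap _ (continuous_layer a₁ a₂).measurable, ← integral_sub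
            (hlayer.mul_bdd hWF.aestronglyMeasurable (ae_of_all _ fun x => hWbd _)) hlayer]
        simp only [mul_sub, mul_one]
    _ = ∫ t in a₁..a₂, ∫ x in Ioi t, (W (cdf ν x) - 1) ∂ν :=
        integral_layer_mul (.of_bound (hWF.sub measurable_const).aestronglyMeasurable (Cw + 1)
          (ae_of_all _ fun x => (abs_sub _ _).trans (by simpa using hWbd _))) h₁₂
    _ = ∫ t in a₁..a₂, K (cdf ν t) := by
        congr 1 with t
        rw [hK]
        exact setIntegral_Ioi_comp_cdf hcont (g := fun u => W u - 1)
          (hW.sub measurable_const).aestronglyMeasurable t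

/-- Let `X ≥ 0` be integrable with continuous distribution function `F`
admitting a density, let `W : [0,1] → ℝ` be bounded measurable with
`K u = ∫_u^1 (W v − 1) dv`, and let `I_a(x) = max(x−a₁,0) − max(x−a₂,0)` be the one-layer
contract with `0 ≤ a₁ ≤ a₂`. Then the expected reinsurer surplus satisfies
`E[I_a(X) W(F(X))] − E[I_a(X)] = ∫_{a₁}^{a₂} K(F t) dt`. -/
theorem reinsurer_surplus_one_layer
    {Ω : Type*} [MeasurableSpace Ω] (P : Measure Ω) [IsProbabilityMeasure P]
    (X : Ω → ℝ) (hX : Measurable X) (hXnonneg : ∀ ω, 0 ≤ X ω)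
    (hXint : Integrable X P)
    (f : ℝ → ℝ) (hf : Measurable f) (hfnonneg : ∀ x, 0 ≤ f x)
    (hdens : Measure.map X P = volume.withDensity (fun x => ENNReal.ofReal (f x)))
    (F : ℝ → ℝ) (hF : ∀ x, F x = (P {ω | X ω ≤ x}).toReal)
    (W : ℝ → ℝ) (hW : Measurable W) (Cw : ℝ) (hWbd : ∀ u, |W u| ≤ Cw)
    (K : ℝ → ℝ) (hK : ∀ u, K u = ∫ v in u..1, (W v - 1))
    (a₁ a₂ : ℝ) (ha₁ : 0 ≤ a₁) (h₁₂ : a₁ ≤ a₂) :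
    (∫ ω, (max (X ω - a₁) 0 - max (X ω - a₂) 0) * W (F (X ω)) ∂P) -
      (∫ ω, (max (X ω - a₁) 0 - max (X ω - a₂) 0) ∂P) = ∫ t in a₁..a₂, K (F t) :=
  reinsurer_surplus_one_layer_general P X hX f hdens F hF W hW Cw hWbd K hK a₁ a₂ h₁₂
end

section
/- Let X be a nonnegative random variable with continuous strictly increasing distribution function F, let ε ∈ (0,1) and x_ε its (1−ε)-percentile (so F(x_ε) = 1 − ε). Let W : [0,1] → ℝ be nondecreasing and integrable with K(u) = ∫_u^1 (W(v) − 1)dv satisfying K(0) ≥ 0, let λ, β ≥ 0, and define ψ_v(x) = −K(F(x)) + (λ + β)·1{x ≤ x_ε}. Then: (i) ψ_v(x_ε) = −K(1−ε) + λ + β, which is strictly positive whenever K(1−ε) < λ + β; and (ii) ψ_v(x) = −K(F(x)) ≤ 0 for every x > x_ε. -/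
open MeasureTheory intervalIntegral

/-! Only the sign of `K` on `[0,1]` needs an argument. If `K u = ∫_u^1 (W - 1) < 0`, then
`W u < 1`, since `W` is nondecreasing; for the same reason `W < 1` on `[0,u]`, so
`K 0 = ∫_0^u (W - 1) + K u < 0`. The rest is evaluating the indicator on either side of `x_ε`. -/

section MonotoneIntegral

variable {g : ℝ → ℝ} {a b u : ℝ}

theorem MonotoneOn.integral_le_sub_mul (hg : MonotoneOn g (Set.Icc a b)) (hu : u ∈ Set.Icc a b) :
    ∫ x in a..u, g x ≤ (u - a) * g u := by
  have hint : IntervalIntegrable g volume a u :=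
    (hg.mono (Set.uIcc_of_le hu.1 ▸ Set.Icc_subset_Icc_right hu.2)).intervalIntegrable
  simpa using integral_mono_on hu.1 hint intervalIntegrable_const
    fun x hx => hg ⟨hx.1, hx.2.trans hu.2⟩ hu hx.2

theorem MonotoneOn.sub_mul_le_integral (hg : MonotoneOn g (Set.Icc a b)) (hu : u ∈ Set.Icc a b) :
    (b - u) * g u ≤ ∫ x in u..b, g x := by
  have hint : IntervalIntegrable g volume u b :=
    (hg.mono (Set.uIcc_of_le hu.2 ▸ Set.Icc_subset_Icc_left hu.1)).intervalIntegrable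
  simpa using integral_mono_on hu.2 intervalIntegrable_const hint
    fun x hx => hg hu ⟨hu.1.trans hx.1, hx.2⟩ hx.1

theorem MonotoneOn.integral_nonneg_of_integral_nonneg (hg : MonotoneOn g (Set.Icc a b))
    (h : 0 ≤ ∫ x in a..b, g x) (hu : u ∈ Set.Icc a b) : 0 ≤ ∫ x in u..b, g x := by
  have hsplit : (∫ x in a..u, g x) + ∫ x in u..b, g x = ∫ x in a..b, g x := by
    have hint : IntervalIntegrable g volume a b :=
      (hg.mono (Set.uIcc_of_le (hu.1.trans hu.2)).subset).intervalIntegrable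
    exact integral_add_adjacent_intervals
      (hint.mono_set (Set.uIcc_subset_uIcc_left (Set.mem_uIcc_of_le hu.1 hu.2)))
      (hint.mono_set (Set.uIcc_subset_uIcc_right (Set.mem_uIcc_of_le hu.1 hu.2)))
  by_contra! hneg
  have hgu : g u < 0 := by
    by_contra! hgu
    linarith [hg.sub_mul_le_integral hu, mul_nonneg (sub_nonneg.2 hu.2) hgu]
  linarith [hg.integral_le_sub_mul hu, mul_nonpos_of_nonneg_of_nonpos (sub_nonneg.2 hu.1) hgu.le]

end MonotoneIntegral

theorem psiV_sign_change_at_percentile_general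
    (W : ℝ → ℝ) (hWmono : MonotoneOn W (Set.Icc 0 1))
    (K : ℝ → ℝ) (hK : ∀ u, K u = ∫ v in u..1, (W v - 1)) (hK0 : 0 ≤ K 0)
    (F : ℝ → ℝ)
    (hF01 : ∀ x, F x ∈ Set.Icc (0 : ℝ) 1)
    (ε : ℝ)
    (xε : ℝ) (hxε : F xε = 1 - ε)
    (lam β : ℝ)
    (ψv : ℝ → ℝ)
    (hψv : ∀ x, ψv x = -K (F x) + (lam + β) * (if x ≤ xε then 1 else 0)) :
    ψv xε = -K (1 - ε) + (lam + β) ∧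
    (K (1 - ε) < lam + β → 0 < ψv xε) ∧
    (∀ x, xε < x → ψv x = -K (F x) ∧ ψv x ≤ 0) := by
  have hK_nonneg : ∀ u ∈ Set.Icc (0 : ℝ) 1, 0 ≤ K u := fun u hu => by
    have hW_sub_one : MonotoneOn (fun v => W v - 1) (Set.Icc 0 1) :=
      fun x hx y hy hxy => sub_le_sub_right (hWmono hx hy hxy) 1
    rw [hK] at hK0 ⊢
    exact hW_sub_one.integral_nonneg_of_integral_nonneg hK0 hu
  have hψv_xε : ψv xε = -K (1 - ε) + (lam + β) := by
    rw [hψv, hxε, if_pos le_rfl, mul_one]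
  refine ⟨hψv_xε, fun h => by linarith, fun x hx => ?_⟩
  have hψv_x : ψv x = -K (F x) := by
    rw [hψv, if_neg (not_le.mpr hx), mul_zero, add_zero]
  exact ⟨hψv_x, by linarith [hK_nonneg (F x) (hF01 x)]⟩

/-- Let `F` be a continuous, strictly increasing (on `[0,∞)`)
distribution function with values in `[0,1]`, `ε ∈ (0,1)` and `x_ε` its `(1−ε)`-percentile
(`F x_ε = 1 − ε`). Let `W : [0,1] → ℝ` be nondecreasing and integrable with
`K u = ∫_u^1 (W v − 1) dv` and `K 0 ≥ 0`, let `λ, β ≥ 0` and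
`ψ_v(x) = −K(F x) + (λ+β)·1{x ≤ x_ε}`. Then (i) `ψ_v(x_ε) = −K(1−ε) + λ + β`, which is
strictly positive whenever `K(1−ε) < λ + β`; and (ii) `ψ_v(x) = −K(F x) ≤ 0` for every
`x > x_ε`. -/
theorem psiV_sign_change_at_percentile
    (W : ℝ → ℝ) (hWmono : MonotoneOn W (Set.Icc 0 1))
    (hWint : IntervalIntegrable W volume 0 1)
    (K : ℝ → ℝ) (hK : ∀ u, K u = ∫ v in u..1, (W v - 1)) (hK0 : 0 ≤ K 0)
    (F : ℝ → ℝ) (hFcont : Continuous F) (hFmono : StrictMonoOn F (Set.Ici 0))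
    (hF01 : ∀ x, F x ∈ Set.Icc (0 : ℝ) 1)
    (ε : ℝ) (hε : ε ∈ Set.Ioo (0 : ℝ) 1)
    (xε : ℝ) (hxε : F xε = 1 - ε)
    (lam β : ℝ) (hlam : 0 ≤ lam) (hβ : 0 ≤ β)
    (ψv : ℝ → ℝ)
    (hψv : ∀ x, ψv x = -K (F x) + (lam + β) * (if x ≤ xε then 1 else 0)) :
    ψv xε = -K (1 - ε) + (lam + β) ∧
    (K (1 - ε) < lam + β → 0 < ψv xε) ∧
    (∀ x, xε < x → ψv x = -K (F x) ∧ ψv x ≤ 0) :=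
  psiV_sign_change_at_percentile_general W hWmono K hK hK0 F hF01 ε xε hxε lam β ψv hψv
end
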